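/- arXiv:1506.09122 — 8 statements merged into one kernel-verified Lean document; each statement's English description precedes it below -/
import Mathlib

section
/- The extended Møller operator R = I - G⁺_{V⁺} ∘ V⁺ on smooth sections Γ(E) is a bijection, with inverse R⁻¹ = I + G⁺ ∘ V⁺, where G⁺ and G⁺_{V⁺} are the retarded Green operators of P and P + V⁺ respectively. -/
/-- The extended Møller operator `R = I - G⁺_{V⁺} ∘ V⁺` on smooth sections is a
bijection, with inverse `R⁻¹ = I + G⁺ ∘ V⁺`, where `G⁺` and `G⁺_{V⁺}` are the retarded Green
operators of `P` and `P + V⁺` respectively.  Abstract setting: a vector space `Γ` with a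
subspace `Γpc` of past-compact sections, `V⁺` mapping `Γ` into `Γpc`, and `G⁺`, `G⁺_{V⁺}`
two-sided inverses of `P` and `P + V⁺` on `Γpc`. -/
theorem extended_moller_operator_bijective
    {Γ : Type*} [AddCommGroup Γ] [Module ℝ Γ]
    (Γpc : Submodule ℝ Γ)
    (P V Gp GpV : Γ →ₗ[ℝ] Γ)
    (hV : ∀ x : Γ, V x ∈ Γpc)
    (hP_pc : ∀ x ∈ Γpc, P x ∈ Γpc)
    (hPV_pc : ∀ x ∈ Γpc, (P + V) x ∈ Γpc)
    (hGp_pc : ∀ x ∈ Γpc, Gp x ∈ Γpc)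
    (hGpV_pc : ∀ x ∈ Γpc, GpV x ∈ Γpc)
    (hPGp : ∀ x ∈ Γpc, P (Gp x) = x)
    (hGpP : ∀ x ∈ Γpc, Gp (P x) = x)
    (hPVGpV : ∀ x ∈ Γpc, (P + V) (GpV x) = x)
    (hGpVPV : ∀ x ∈ Γpc, GpV ((P + V) x) = x) :
    Function.Bijective (LinearMap.id - GpV ∘ₗ V : Γ →ₗ[ℝ] Γ) ∧
    (LinearMap.id - GpV ∘ₗ V) ∘ₗ (LinearMap.id + Gp ∘ₗ V) = (LinearMap.id : Γ →ₗ[ℝ] Γ) ∧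
    (LinearMap.id + Gp ∘ₗ V) ∘ₗ (LinearMap.id - GpV ∘ₗ V) = (LinearMap.id : Γ →ₗ[ℝ] Γ) := by
  -- Key identity 1: for `y ∈ Γpc`, `GpV y + GpV (V (Gp y)) = Gp y`.
  have key1 : ∀ y ∈ Γpc, GpV y + GpV (V (Gp y)) = Gp y := by
    intro y hy
    have h1 : (P + V) (Gp y) = y + V (Gp y) := by
      simp [LinearMap.add_apply, hPGp y hy]
    have h2 : GpV ((P + V) (Gp y)) = Gp y := hGpVPV _ (hGp_pc y hy)
    rw [h1, map_add] at h2
    exact h2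
  -- Key identity 2: for `y ∈ Γpc`, `GpV y + Gp (V (GpV y)) = Gp y`.
  have key2 : ∀ y ∈ Γpc, GpV y + Gp (V (GpV y)) = Gp y := by
    intro y hy
    have h1 : P (GpV y) = y - V (GpV y) := by
      have h := hPVGpV y hy
      simp only [LinearMap.add_apply] at h
      exact eq_sub_of_add_eq h
    have h2 : Gp (P (GpV y)) = GpV y := hGpP _ (hGpV_pc y hy)
    rw [h1, map_sub] at h2
    nth_rewrite 1 [← h2]
    abel
  -- First composition identity.
  have comp1 : (LinearMap.id - GpV ∘ₗ V) ∘ₗ (LinearMap.id + Gp ∘ₗ V)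
      = (LinearMap.id : Γ →ₗ[ℝ] Γ) := by
    apply LinearMap.ext
    intro x
    simp only [LinearMap.comp_apply, LinearMap.add_apply, LinearMap.sub_apply,
      LinearMap.id_apply, map_add]
    have := key1 (V x) (hV x)
    abel_nf
    linear_combination (norm := abel) - this
  -- Second composition identity.
  have comp2 : (LinearMap.id + Gp ∘ₗ V) ∘ₗ (LinearMap.id - GpV ∘ₗ V)
      = (LinearMap.id : Γ →ₗ[ℝ] Γ) := by
    apply LinearMap.ext
    intro x
    simp only [LinearMap.comp_apply, LinearMap.add_apply, LinearMap.sub_apply,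
      LinearMap.id_apply, map_sub]
    have := key2 (V x) (hV x)
    abel_nf
    linear_combination (norm := abel) - this
  refine ⟨?_, comp1, comp2⟩
  refine Function.bijective_iff_has_inverse.2 ⟨fun x => x + Gp (V x), fun x => ?_, fun x => ?_⟩
  · -- left inverse: (I + Gp V) ((I - GpV V) x) = x
    simp only [LinearMap.sub_apply, LinearMap.comp_apply, LinearMap.id_apply, map_sub]
    have h := key2 (V x) (hV x)
    linear_combination (norm := abel) -h
  · -- right inverse: (I - GpV V) (x + Gp (V x)) = x
    simp only [LinearMap.sub_apply, LinearMap.comp_apply, LinearMap.id_apply, map_add]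
    have h := key1 (V x) (hV x)
    linear_combination (norm := abel) -h
end

section
/- The extended Møller operator R = I - G⁺_{V⁺} ∘ V⁺ intertwines the dynamics: P_{V⁺} ∘ R = P on Γ(E). Consequently R restricts to an isomorphism from the kernel of P onto the kernel of P_{V⁺} in Γ(E). -/
/-- The extended Møller operator `R = I - G⁺_{V⁺} ∘ V⁺` intertwines the dynamics:
`P_{V⁺} ∘ R = P` on `Γ(E)`.  Consequently `R` restricts to an isomorphism (a bijection)
from the kernel of `P` onto the kernel of `P_{V⁺}`. -/
theorem extended_moller_operator_intertwines
    {Γ : Type*} [AddCommGroup Γ] [Module ℝ Γ]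
    (Γpc : Submodule ℝ Γ)
    (P V Gp GpV : Γ →ₗ[ℝ] Γ)
    (hV : ∀ x : Γ, V x ∈ Γpc)
    (hP_pc : ∀ x ∈ Γpc, P x ∈ Γpc)
    (hPV_pc : ∀ x ∈ Γpc, (P + V) x ∈ Γpc)
    (hGp_pc : ∀ x ∈ Γpc, Gp x ∈ Γpc)
    (hGpV_pc : ∀ x ∈ Γpc, GpV x ∈ Γpc)
    (hPGp : ∀ x ∈ Γpc, P (Gp x) = x)
    (hGpP : ∀ x ∈ Γpc, Gp (P x) = x)
    (hPVGpV : ∀ x ∈ Γpc, (P + V) (GpV x) = x)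
    (hGpVPV : ∀ x ∈ Γpc, GpV ((P + V) x) = x) :
    (P + V) ∘ₗ (LinearMap.id - GpV ∘ₗ V) = P ∧
    Set.BijOn (LinearMap.id - GpV ∘ₗ V : Γ →ₗ[ℝ] Γ)
      {φ : Γ | P φ = 0} {φ : Γ | (P + V) φ = 0} := by
  set R : Γ →ₗ[ℝ] Γ := LinearMap.id - GpV ∘ₗ V with hRdef
  have hR : ∀ φ : Γ, R φ = φ - GpV (V φ) := by intro φ; simp [hRdef]
  have hintw : ∀ φ : Γ, (P + V) (R φ) = P φ := by
    intro φ
    have h1 : (P + V) (GpV (V φ)) = V φ := hPVGpV _ (hV φ)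
    have h2 : (P + V) (R φ) = (P + V) φ - (P + V) (GpV (V φ)) := by rw [hR, map_sub]
    rw [h2, h1]
    simp
  refine ⟨LinearMap.ext hintw, ?_⟩
  set S : Γ → Γ := fun ψ => ψ + Gp (V ψ) with hSdef
  have hmapsR : Set.MapsTo (R : Γ → Γ) {φ : Γ | P φ = 0} {φ : Γ | (P + V) φ = 0} := by
    intro φ hφ
    simp only [Set.mem_setOf_eq] at hφ ⊢
    rw [hintw, hφ]
  have hmapsS : Set.MapsTo S {φ : Γ | (P + V) φ = 0} {φ : Γ | P φ = 0} := by
    intro ψ hψ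
    simp only [Set.mem_setOf_eq] at hψ ⊢
    have hPψ : P ψ + V ψ = 0 := by simpa using hψ
    have : P (S ψ) = P ψ + V ψ := by
      simp [hSdef, map_add, hPGp _ (hV ψ)]
    rw [this, hPψ]
  have hSR : ∀ φ ∈ {φ : Γ | P φ = 0}, S (R φ) = φ := by
    intro φ _
    have hmem : GpV (V φ) ∈ Γpc := hGpV_pc _ (hV φ)
    have h1 : P (GpV (V φ)) + V (GpV (V φ)) = V φ := by
      have := hPVGpV _ (hV φ)
      simpa using this
    have hPG : P (GpV (V φ)) = V φ - V (GpV (V φ)) := eq_sub_of_add_eq h1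
    have h2 : Gp (V φ - V (GpV (V φ))) = GpV (V φ) := by
      rw [← hPG]; exact hGpP _ hmem
    have h3 : V (R φ) = V φ - V (GpV (V φ)) := by rw [hR, map_sub]
    show R φ + Gp (V (R φ)) = φ
    rw [h3, h2, hR]
    abel
  have hRS : ∀ ψ ∈ {φ : Γ | (P + V) φ = 0}, R (S ψ) = ψ := by
    intro ψ _
    have hmem : Gp (V ψ) ∈ Γpc := hGp_pc _ (hV ψ)
    have h1 : (P + V) (Gp (V ψ)) = V ψ + V (Gp (V ψ)) := by
      simp [hPGp _ (hV ψ)]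
    have h2 : GpV (V ψ + V (Gp (V ψ))) = Gp (V ψ) := by
      rw [← h1]; exact hGpVPV _ hmem
    have h3 : V (S ψ) = V ψ + V (Gp (V ψ)) := by simp [hSdef, map_add]
    rw [hR (S ψ), h3, h2]
    show ψ + Gp (V ψ) - Gp (V ψ) = ψ
    abel
  exact Set.InvOn.bijOn ⟨hSR, hRS⟩ hmapsR hmapsS
end

section
/- R ∘ G⁺ = G⁺_{V⁺} on past-compact sections, where R = I - G⁺_{V⁺}V⁺ is the extended Møller operator: the Møller operator maps the retarded Green operator of P to that of P_{V⁺}. -/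
/-- `R ∘ G⁺ = G⁺_{V⁺}` on past-compact sections, where `R = I - G⁺_{V⁺}V⁺`
is the extended Møller operator.  Abstract setting with the intertwining identity
`P_{V⁺} ∘ R = P` assumed. -/
theorem moller_maps_retarded_green
    {Γ : Type*} [AddCommGroup Γ] [Module ℝ Γ]
    (Γpc : Submodule ℝ Γ)
    (P V Gp GpV : Γ →ₗ[ℝ] Γ)
    (hV : ∀ x : Γ, V x ∈ Γpc)
    (hP_pc : ∀ x ∈ Γpc, P x ∈ Γpc)
    (hGp_pc : ∀ x ∈ Γpc, Gp x ∈ Γpc)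
    (hGpV_pc : ∀ x ∈ Γpc, GpV x ∈ Γpc)
    (hPGp : ∀ x ∈ Γpc, P (Gp x) = x)
    (hGpP : ∀ x ∈ Γpc, Gp (P x) = x)
    (hPVGpV : ∀ x ∈ Γpc, (P + V) (GpV x) = x)
    (hGpVPV : ∀ x ∈ Γpc, GpV ((P + V) x) = x)
    (hintertwine : (P + V) ∘ₗ (LinearMap.id - GpV ∘ₗ V) = P) :
    ∀ f ∈ Γpc, (LinearMap.id - GpV ∘ₗ V : Γ →ₗ[ℝ] Γ) (Gp f) = GpV f := by
  intro f hf
  set R : Γ →ₗ[ℝ] Γ := LinearMap.id - GpV ∘ₗ V with hR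
  have hmem : R (Gp f) ∈ Γpc := by
    have : R (Gp f) = Gp f - GpV (V (Gp f)) := rfl
    rw [this]
    exact Submodule.sub_mem _ (hGp_pc f hf) (hGpV_pc _ (hV _))
  have h1 : (P + V) (R (Gp f)) = f := by
    have := congrArg (fun L : Γ →ₗ[ℝ] Γ => L (Gp f)) hintertwine
    simpa using (this.trans (hPGp f hf))
  calc R (Gp f) = GpV ((P + V) (R (Gp f))) := (hGpVPV _ hmem).symm
    _ = GpV f := by rw [h1]
end

section
/- The dual Møller operator I - V⁺ ∘ G⁻_{V⁺}, acting on compactly supported sections, intertwines in the opposite direction: (I - V⁺G⁻_{V⁺}) ∘ P_{V⁺} = P on Γ₀(E), and it is a bijection of Γ₀(E)/P_{V⁺}Γ₀(E) onto Γ₀(E)/PΓ₀(E) with inverse induced by I + V⁺ ∘ G⁻. -/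
/-- The dual Møller operator `D = I - V⁺ ∘ G⁻_{V⁺}` on compactly supported
sections intertwines in the opposite direction: `D ∘ P_{V⁺} = P` on `Γ₀(E)`, and it induces
a bijection of `Γ₀/P_{V⁺}Γ₀` onto `Γ₀/PΓ₀` with inverse induced by `Dinv = I + V⁺ ∘ G⁻`. -/
theorem dual_moller_operator
    {Γ : Type*} [AddCommGroup Γ] [Module ℝ Γ]
    (Γ0 Γfc : Submodule ℝ Γ) (hΓ0fc : Γ0 ≤ Γfc)
    (P V Gm GmV : Γ →ₗ[ℝ] Γ)
    (hP_fc : ∀ x ∈ Γfc, P x ∈ Γfc)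
    (hPV_fc : ∀ x ∈ Γfc, (P + V) x ∈ Γfc)
    (hGm_fc : ∀ x ∈ Γfc, Gm x ∈ Γfc)
    (hGmV_fc : ∀ x ∈ Γfc, GmV x ∈ Γfc)
    (hVGm0 : ∀ x ∈ Γ0, V (Gm x) ∈ Γ0)
    (hVGmV0 : ∀ x ∈ Γ0, V (GmV x) ∈ Γ0)
    (hP0 : ∀ x ∈ Γ0, P x ∈ Γ0)
    (hPV0 : ∀ x ∈ Γ0, (P + V) x ∈ Γ0)
    (hPGm : ∀ x ∈ Γfc, P (Gm x) = x)
    (hGmP : ∀ x ∈ Γfc, Gm (P x) = x)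
    (hPVGmV : ∀ x ∈ Γfc, (P + V) (GmV x) = x)
    (hGmVPV : ∀ x ∈ Γfc, GmV ((P + V) x) = x) :
    -- the dual intertwining relation on Γ₀
    (∀ x ∈ Γ0, (LinearMap.id - V ∘ₗ GmV : Γ →ₗ[ℝ] Γ) ((P + V) x) = P x) ∧
    -- D maps the subspace P_{V⁺}Γ₀ into PΓ₀ (well-definedness on quotients), and
    -- Dinv maps PΓ₀ into P_{V⁺}Γ₀
    (∀ x ∈ Γ0, (LinearMap.id - V ∘ₗ GmV : Γ →ₗ[ℝ] Γ) ((P + V) x) ∈ Submodule.map P Γ0) ∧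
    (∀ x ∈ Γ0, (LinearMap.id + V ∘ₗ Gm : Γ →ₗ[ℝ] Γ) (P x) ∈ Submodule.map (P + V) Γ0) ∧
    -- the induced quotient maps are mutually inverse
    (∀ α ∈ Γ0,
      (LinearMap.id - V ∘ₗ GmV : Γ →ₗ[ℝ] Γ) ((LinearMap.id + V ∘ₗ Gm : Γ →ₗ[ℝ] Γ) α) - α ∈ Submodule.map P Γ0) ∧
    (∀ α ∈ Γ0,
      (LinearMap.id + V ∘ₗ Gm : Γ →ₗ[ℝ] Γ) ((LinearMap.id - V ∘ₗ GmV : Γ →ₗ[ℝ] Γ) α) - α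
        ∈ Submodule.map (P + V) Γ0) := by
  have key1 : ∀ x ∈ Γ0, (LinearMap.id - V ∘ₗ GmV : Γ →ₗ[ℝ] Γ) ((P + V) x) = P x := by
    intro x hx
    rw [LinearMap.sub_apply, LinearMap.comp_apply, LinearMap.id_apply,
      hGmVPV x (hΓ0fc hx), LinearMap.add_apply, add_sub_cancel_right]
  refine ⟨key1, ?_, ?_, ?_, ?_⟩
  · intro x hx
    rw [key1 x hx]
    exact ⟨x, hx, rfl⟩
  · intro x hx
    rw [LinearMap.add_apply, LinearMap.comp_apply, LinearMap.id_apply, hGmP x (hΓ0fc hx)]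
    exact ⟨x, hx, rfl⟩
  · intro α hα
    have hαfc := hΓ0fc hα
    have h1 : (P + V) (Gm α) = α + V (Gm α) := by
      rw [LinearMap.add_apply, hPGm α hαfc]
    have hDinv : (LinearMap.id + V ∘ₗ Gm : Γ →ₗ[ℝ] Γ) α = (P + V) (Gm α) := by
      rw [LinearMap.add_apply, LinearMap.comp_apply, LinearMap.id_apply, h1]
    have : (LinearMap.id - V ∘ₗ GmV : Γ →ₗ[ℝ] Γ)
        ((LinearMap.id + V ∘ₗ Gm : Γ →ₗ[ℝ] Γ) α) - α = 0 := by
      rw [hDinv, LinearMap.sub_apply, LinearMap.comp_apply, LinearMap.id_apply,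
        hGmVPV _ (hGm_fc α hαfc), h1]
      abel
    rw [this]
    exact (Submodule.map P Γ0).zero_mem
  · intro α hα
    have hαfc := hΓ0fc hα
    have h1 : P (GmV α) + V (GmV α) = α := by
      have := hPVGmV α hαfc
      rwa [LinearMap.add_apply] at this
    have hD : (LinearMap.id - V ∘ₗ GmV : Γ →ₗ[ℝ] Γ) α = P (GmV α) := by
      rw [LinearMap.sub_apply, LinearMap.comp_apply, LinearMap.id_apply]
      exact (eq_sub_of_add_eq h1).symm
    have : (LinearMap.id + V ∘ₗ Gm : Γ →ₗ[ℝ] Γ)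
        ((LinearMap.id - V ∘ₗ GmV : Γ →ₗ[ℝ] Γ) α) - α = 0 := by
      rw [hD, LinearMap.add_apply, LinearMap.comp_apply, LinearMap.id_apply,
        hGmP _ (hGmV_fc α hαfc), h1, sub_self]
    rw [this]
    exact (Submodule.map (P + V) Γ0).zero_mem
end

section
/- The composite (I - V⁺G⁻_{V⁺}) ∘ (I + V⁺G⁻) equals the identity modulo the image of P: for every α ∈ Γ₀(E), (I - V⁺G⁻_{V⁺})(I + V⁺G⁻)α - α ∈ P[Γ₀(E)]; in fact (I - V⁺G⁻_{V⁺})(I + V⁺G⁻)α = α exactly, using P_{V⁺} - P = V⁺. -/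
/-- The composite `(I - V⁺G⁻_{V⁺}) ∘ (I + V⁺G⁻)` equals the identity modulo the
image of `P`: for every `α ∈ Γ₀(E)` the difference lies in `P[Γ₀(E)]`; in fact the composite
equals the identity exactly, using `P_{V⁺} - P = V⁺`. -/
theorem dual_moller_composite_identity
    {Γ : Type*} [AddCommGroup Γ] [Module ℝ Γ]
    (Γ0 Γfc : Submodule ℝ Γ) (hΓ0fc : Γ0 ≤ Γfc)
    (P V Gm GmV : Γ →ₗ[ℝ] Γ)
    (hP_fc : ∀ x ∈ Γfc, P x ∈ Γfc)
    (hGm_fc : ∀ x ∈ Γfc, Gm x ∈ Γfc)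
    (hGmV_fc : ∀ x ∈ Γfc, GmV x ∈ Γfc)
    (hVGm0 : ∀ x ∈ Γ0, V (Gm x) ∈ Γ0)
    (hVGmV0 : ∀ x ∈ Γ0, V (GmV x) ∈ Γ0)
    (hPGm : ∀ x ∈ Γfc, P (Gm x) = x)
    (hGmP : ∀ x ∈ Γfc, Gm (P x) = x)
    (hPVGmV : ∀ x ∈ Γfc, (P + V) (GmV x) = x)
    (hGmVPV : ∀ x ∈ Γfc, GmV ((P + V) x) = x) :
    (∀ α ∈ Γ0, (LinearMap.id - V ∘ₗ GmV : Γ →ₗ[ℝ] Γ) ((LinearMap.id + V ∘ₗ Gm : Γ →ₗ[ℝ] Γ) α) = α) ∧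
    (∀ α ∈ Γ0,
      (LinearMap.id - V ∘ₗ GmV : Γ →ₗ[ℝ] Γ) ((LinearMap.id + V ∘ₗ Gm : Γ →ₗ[ℝ] Γ) α) - α ∈ Submodule.map P Γ0) := by
  have key : ∀ α ∈ Γ0,
      (LinearMap.id - V ∘ₗ GmV : Γ →ₗ[ℝ] Γ) ((LinearMap.id + V ∘ₗ Gm : Γ →ₗ[ℝ] Γ) α) = α := by
    intro α hα
    have hαfc : α ∈ Γfc := hΓ0fc hα
    have h1 : GmV (α + V (Gm α)) = Gm α := by
      have := hGmVPV (Gm α) (hGm_fc α hαfc)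
      simpa [hPGm α hαfc] using this
    simp [LinearMap.sub_apply, LinearMap.add_apply, h1]
  refine ⟨key, fun α hα => ?_⟩
  rw [key α hα, sub_self]
  exact Submodule.zero_mem _
end

section
/- R ∘ G ∘ R̃* = G_{V⁺} on compactly supported sections, where R = I - G⁺_{V⁺}V⁺, R̃* = I - V⁺G⁻_{V⁺}, G = G⁺ - G⁻ is the causal propagator of P, and G_{V⁺} = G⁺_{V⁺} - G⁻_{V⁺} is the causal propagator of P_{V⁺}. -/
/-- `R ∘ G ∘ R̃* = G_{V⁺}` on compactly supported sections, where
`R = I - G⁺_{V⁺}V⁺`, `R̃* = I - V⁺G⁻_{V⁺}`, `G = G⁺ - G⁻` is the causal propagator of `P`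
and `G_{V⁺} = G⁺_{V⁺} - G⁻_{V⁺}` that of `P_{V⁺}`. -/
theorem moller_maps_causal_propagator
    {Γ : Type*} [AddCommGroup Γ] [Module ℝ Γ]
    (Γ0 Γpc Γfc : Submodule ℝ Γ)
    (hΓ0pc : Γ0 ≤ Γpc) (hΓ0fc : Γ0 ≤ Γfc)
    (P V Gp Gm GpV GmV : Γ →ₗ[ℝ] Γ)
    (hV : ∀ x : Γ, V x ∈ Γpc)
    (hVGmV0 : ∀ x ∈ Γ0, V (GmV x) ∈ Γ0)
    (hP_pc : ∀ x ∈ Γpc, P x ∈ Γpc) (hP_fc : ∀ x ∈ Γfc, P x ∈ Γfc)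
    (hGp_pc : ∀ x ∈ Γpc, Gp x ∈ Γpc) (hGm_fc : ∀ x ∈ Γfc, Gm x ∈ Γfc)
    (hGpV_pc : ∀ x ∈ Γpc, GpV x ∈ Γpc) (hGmV_fc : ∀ x ∈ Γfc, GmV x ∈ Γfc)
    (hPGp : ∀ x ∈ Γpc, P (Gp x) = x) (hGpP : ∀ x ∈ Γpc, Gp (P x) = x)
    (hPGm : ∀ x ∈ Γfc, P (Gm x) = x) (hGmP : ∀ x ∈ Γfc, Gm (P x) = x)
    (hPVGpV : ∀ x ∈ Γpc, (P + V) (GpV x) = x) (hGpVPV : ∀ x ∈ Γpc, GpV ((P + V) x) = x)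
    (hPVGmV : ∀ x ∈ Γfc, (P + V) (GmV x) = x) (hGmVPV : ∀ x ∈ Γfc, GmV ((P + V) x) = x) :
    ∀ f ∈ Γ0,
      (LinearMap.id - GpV ∘ₗ V : Γ →ₗ[ℝ] Γ) ((Gp - Gm) ((LinearMap.id - V ∘ₗ GmV : Γ →ₗ[ℝ] Γ) f))
        = (GpV - GmV) f := by

  intro f hf
  have hf_pc := hΓ0pc hf
  have hf_fc := hΓ0fc hf
  have hVG0 := hVGmV0 f hf
  have hVG_pc := hΓ0pc hVG0
  set g := f - V (GmV f) with hg
  have hg_pc : g ∈ Γpc := Submodule.sub_mem _ hf_pc hVG_pc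
  have h1 : P (GmV f) = g := by
    have h := hPVGmV f hf_fc
    simp only [LinearMap.add_apply] at h
    rw [hg]
    exact eq_sub_of_add_eq h
  have h2 : Gm g = GmV f := by
    rw [← h1]; exact hGmP _ (hGmV_fc f hf_fc)
  have h3 : Gp g - GpV (V (Gp g)) = GpV g := by
    have hGpg_pc := hGp_pc g hg_pc
    have h := hGpVPV (Gp g) hGpg_pc
    simp only [LinearMap.add_apply, map_add, hPGp g hg_pc] at h
    exact sub_eq_of_eq_add h.symm
  have h4 : GpV g = GpV f - GpV (V (GmV f)) := by rw [hg, map_sub]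
  simp only [LinearMap.sub_apply, LinearMap.id_coe, id_eq, LinearMap.coe_comp,
    Function.comp_apply]
  rw [show f - V (GmV f) = g from rfl, h2, map_sub V, map_sub GpV]
  have key : Gp g - GmV f - (GpV (V (Gp g)) - GpV (V (GmV f)))
      = (Gp g - GpV (V (Gp g))) + GpV (V (GmV f)) - GmV f := by abel
  rw [key, h3, h4]
  abel
end

section
/- The time-slice map TS^V: ker P_V → Γ_tc(E)/P_V[Γ_tc(E)], φ ↦ [P_V(η⁺φ)], is a well-defined linear isomorphism independent of the choice of the cut-off η⁺, with inverse induced by the causal propagator: G_V ∘ TS^V = id on solutions and TS^V ∘ G_V = id on the quotient. -/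
/-- The time-slice map `TS^V : ker P_V → Γ_tc/P_V[Γ_tc]`, `φ ↦ [P_V(η⁺φ)]`,
is a well-defined linear isomorphism independent of the choice of the cut-off `η⁺`, with
inverse induced by the causal propagator: `G_V ∘ TS^V = id` on solutions and
`TS^V ∘ G_V = id` on the quotient.  Abstract setting: `G_V = G⁺_V - G⁻_V`, `η` a cut-off
operator splitting every solution `φ` as `η φ ∈ Γ_pc` and `φ - η φ ∈ Γ_fc`. -/
theorem time_slice_isomorphism
    {Γ : Type*} [AddCommGroup Γ] [Module ℝ Γ]
    (Γpc Γfc Γtc : Submodule ℝ Γ) (hΓtc : Γtc = Γpc ⊓ Γfc)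
    (PV Gp Gm η : Γ →ₗ[ℝ] Γ)
    (hP_pc : ∀ x ∈ Γpc, PV x ∈ Γpc) (hP_fc : ∀ x ∈ Γfc, PV x ∈ Γfc)
    (hGp_pc : ∀ x ∈ Γpc, Gp x ∈ Γpc) (hGm_fc : ∀ x ∈ Γfc, Gm x ∈ Γfc)
    (hPGp : ∀ x ∈ Γpc, PV (Gp x) = x) (hGpP : ∀ x ∈ Γpc, Gp (PV x) = x)
    (hPGm : ∀ x ∈ Γfc, PV (Gm x) = x) (hGmP : ∀ x ∈ Γfc, Gm (PV x) = x)
    (hη : ∀ φ : Γ, PV φ = 0 → η φ ∈ Γpc ∧ φ - η φ ∈ Γfc) :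
    -- well-definedness and G_V ∘ TS^V = id on solutions
    (∀ φ : Γ, PV φ = 0 → PV (η φ) ∈ Γtc ∧ (Gp - Gm) (PV (η φ)) = φ) ∧
    -- TS^V ∘ G_V = id on the quotient: G_V α is a solution and TS^V(G_V α) = [α]
    (∀ α ∈ Γtc, PV ((Gp - Gm) α) = 0 ∧
      PV (η ((Gp - Gm) α)) - α ∈ Submodule.map PV Γtc) ∧
    -- independence of the choice of cut-off
    (∀ η₂ : Γ →ₗ[ℝ] Γ, (∀ φ : Γ, PV φ = 0 → η φ - η₂ φ ∈ Γtc) →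
      ∀ φ : Γ, PV φ = 0 → PV (η φ) - PV (η₂ φ) ∈ Submodule.map PV Γtc) := by
  subst hΓtc
  refine ⟨?_, ?_, ?_⟩
  · intro φ hφ
    obtain ⟨hpc, hfc⟩ := hη φ hφ
    have hfc' : η φ - φ ∈ Γfc := by
      have := Γfc.neg_mem hfc; simpa [neg_sub] using this
    have hPη : PV (η φ) = PV (η φ - φ) := by
      simp [map_sub, hφ]
    constructor
    · exact ⟨hP_pc _ hpc, by rw [hPη]; exact hP_fc _ hfc'⟩
    · have h1 : Gp (PV (η φ)) = η φ := hGpP _ hpc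
      have h2 : Gm (PV (η φ)) = η φ - φ := by
        rw [hPη]; exact hGmP _ hfc'
      simp [LinearMap.sub_apply, h1, h2]
  · intro α hα
    obtain ⟨hαpc, hαfc⟩ := hα
    set φ := (Gp - Gm) α with hφdef
    have hsol : PV φ = 0 := by
      simp [hφdef, LinearMap.sub_apply, map_sub, hPGp _ hαpc, hPGm _ hαfc]
    refine ⟨hsol, ?_⟩
    obtain ⟨hpc, hfc⟩ := hη φ hsol
    refine ⟨η φ - Gp α, ⟨Γpc.sub_mem hpc (hGp_pc _ hαpc), ?_⟩, ?_⟩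
    · have : η φ - Gp α = (η φ - φ) + (- Gm α) := by
        simp [hφdef, LinearMap.sub_apply]; abel
      rw [this]
      exact Γfc.add_mem (by simpa [neg_sub] using Γfc.neg_mem hfc)
        (Γfc.neg_mem (hGm_fc _ hαfc))
    · rw [map_sub, hPGp _ hαpc]
  · intro η₂ hdiff φ hφ
    exact ⟨η φ - η₂ φ, hdiff φ hφ, by rw [map_sub]⟩
end

section
/- If α̃(η) is an isometry action commuting with P (but not necessarily with the cut-off χ⁺), then the conjugated operator α̃(-η) ∘ G⁻_{V⁺_λ} ∘ α̃(η) is the advanced Green operator of the transported operator P + V·(α̃(-η)χ⁺)_λ; i.e. it satisfies both two-sided inverse identities on timelike-compact sections and the advanced support property, hence equals G⁻ of the transported operator by uniqueness. -/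
/-- If `α̃(η)` is an isometry action commuting with `P` (but not necessarily
with the cut-off `χ⁺`), then `α̃(-η) ∘ G⁻_{V⁺_λ} ∘ α̃(η)` is the advanced Green operator of
the transported operator `P_{V⁺_{λ,η}} = P + V·(α̃(-η)χ⁺)_λ`: it satisfies both two-sided
inverse identities on timelike-compact sections and the advanced support property, hence
equals `G⁻_{V⁺_{λ,η}}` by uniqueness. -/
theorem conjugated_advanced_green
    {Γ M : Type*} [AddCommGroup Γ] [Module ℝ Γ]
    (Γtc Γfc : Submodule ℝ Γ) (hΓtcfc : Γtc ≤ Γfc)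
    (PVlam PVeta Gm Gmeta A Ainv : Γ →ₗ[ℝ] Γ)
    -- A = α̃(η) is invertible with inverse Ainv = α̃(-η)
    (hAAinv : A ∘ₗ Ainv = LinearMap.id) (hAinvA : Ainv ∘ₗ A = LinearMap.id)
    (hA_fc : ∀ x ∈ Γfc, A x ∈ Γfc) (hAinv_fc : ∀ x ∈ Γfc, Ainv x ∈ Γfc)
    -- transport of the operator: P_{V⁺_λ} ∘ A = A ∘ P_{V⁺_{λ,η}}
    (htransport : PVlam ∘ₗ A = A ∘ₗ PVeta)
    -- G⁻_{V⁺_λ} is the advanced Green operator of P_{V⁺_λ} on Γfc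
    (hGm_fc : ∀ x ∈ Γfc, Gm x ∈ Γfc)
    (hPGm : ∀ x ∈ Γfc, PVlam (Gm x) = x) (hGmP : ∀ x ∈ Γfc, Gm (PVlam x) = x)
    -- G⁻_{V⁺_{λ,η}} is the (unique) advanced Green operator of the transported operator
    (hGmeta_fc : ∀ x ∈ Γfc, Gmeta x ∈ Γfc)
    (hPGmeta : ∀ x ∈ Γfc, PVeta (Gmeta x) = x) (hGmetaP : ∀ x ∈ Γfc, Gmeta (PVeta x) = x)
    -- abstract causal-support structure: supports, causal past, and the isometry on points
    (supp : Γ → Set M) (Jm : Set M → Set M) (αe αeinv : M → M)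
    (hαinv : ∀ S : Set M, αeinv '' (αe '' S) = S)
    (hsuppGm : ∀ f : Γ, supp (Gm f) ⊆ Jm (supp f))
    (hsuppA : ∀ f : Γ, supp (A f) ⊆ αe '' supp f)
    (hsuppAinv : ∀ f : Γ, supp (Ainv f) ⊆ αeinv '' supp f)
    -- the isometry preserves the causal structure
    (hJα : ∀ S : Set M, Jm (αe '' S) = αe '' Jm S)
    (hJmono : ∀ S T : Set M, S ⊆ T → Jm S ⊆ Jm T) :
    -- the conjugated operator satisfies the two-sided inverse identities on Γtc
    (∀ x ∈ Γtc, PVeta (Ainv (Gm (A x))) = x) ∧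
    (∀ x ∈ Γtc, Ainv (Gm (A (PVeta x))) = x) ∧
    -- the advanced support property
    (∀ f : Γ, supp (Ainv (Gm (A f))) ⊆ Jm (supp f)) ∧
    -- hence, by uniqueness, it coincides with G⁻ of the transported operator
    (∀ x ∈ Γfc, Ainv (Gm (A x)) = Gmeta x) := by
  have hAinvA' : ∀ y : Γ, Ainv (A y) = y := fun y =>
    congrArg (fun L : Γ →ₗ[ℝ] Γ => L y) hAinvA
  have hAAinv' : ∀ y : Γ, A (Ainv y) = y := fun y =>
    congrArg (fun L : Γ →ₗ[ℝ] Γ => L y) hAAinv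
  have htr : ∀ y : Γ, PVlam (A y) = A (PVeta y) := fun y =>
    congrArg (fun L : Γ →ₗ[ℝ] Γ => L y) htransport
  have hPVeta : ∀ y : Γ, PVeta y = Ainv (PVlam (A y)) := by
    intro y; rw [htr, hAinvA']
  have key1 : ∀ x ∈ Γfc, PVeta (Ainv (Gm (A x))) = x := by
    intro x hx
    rw [hPVeta, hAAinv', hPGm (A x) (hA_fc x hx), hAinvA']
  refine ⟨fun x hx => key1 x (hΓtcfc hx), ?_, ?_, ?_⟩
  · intro x hx
    have hx' := hΓtcfc hx
    rw [hPVeta, hAAinv', hGmP (A x) (hA_fc x hx'), hAinvA']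
  · intro f
    calc supp (Ainv (Gm (A f))) ⊆ αeinv '' supp (Gm (A f)) := hsuppAinv _
      _ ⊆ αeinv '' Jm (supp (A f)) := Set.image_mono (hsuppGm _)
      _ ⊆ αeinv '' Jm (αe '' supp f) :=
          Set.image_mono (hJmono _ _ (hsuppA _))
      _ = αeinv '' (αe '' Jm (supp f)) := by rw [hJα]
      _ = Jm (supp f) := hαinv _
  · intro x hx
    have hy : Ainv (Gm (A x)) ∈ Γfc := hAinv_fc _ (hGm_fc _ (hA_fc _ hx))
    have := hGmetaP _ hy
    rw [key1 x hx] at this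
    exact this.symm
end
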